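/- Direct consistency: for the argumentation framework constructed from a hierarchical abstract normative system, and for any complete (hence preferred, grounded or stable) extension E, the set of conclusions of ordinary arguments in E is consistent, i.e., it contains no literal together with its negation. -/
import Mathlib


namespace HANSF

/-- Literals: ⊤, positive atoms and negated atoms. -/
inductive Lit (E : Type) where
  | top : Lit E
  | pos : E → Lit E
  | neg : E → Lit E
deriving DecidableEq

variable {E : Type}

/-- Complement (negation) of a literal; `⊤` is mapped to itself (junk value). -/
def Lit.compl : Lit E → Lit E
  | .top => .top
  | .pos e => .neg e
  | .neg e => .pos e

/-- `y` is the complement of the (non-`⊤`) literal `x`. -/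
def Lit.isCompl (x y : Lit E) : Prop := x ≠ .top ∧ y = x.compl

/-- A set of literals is consistent iff it contains no literal together with its negation. -/
def LitConsistent (S : Set (Lit E)) : Prop := ∀ x ∈ S, ∀ y ∈ S, ¬ x.isCompl y

/-- A norm is a pair (body, head) of literals. -/
abbrev Norm (E : Type) := Lit E × Lit E

/-- Hierarchical abstract normative system. -/
structure HANS (E : Type) [DecidableEq E] where
  N : Finset (Norm E)
  C : Finset (Lit E)
  r : Norm E → ℕ
  top_mem : Lit.top ∈ C
  C_cons : LitConsistent (C : Set (Lit E))

variable [DecidableEq E]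

/-- The HANS is totally ordered: distinct norms have distinct ranks. -/
def TotallyOrdered (H : HANS E) : Prop :=
  ∀ u ∈ H.N, ∀ v ∈ H.N, H.r u = H.r v → u = v

/-- Consecutive norms are chained: the head of each norm is the body of the next. -/
def chain : List (Norm E) → Prop
  | a :: b :: t => a.2 = b.1 ∧ chain (b :: t)
  | _ => True

/-- All literals traversed by a list of norms. -/
def litsOf : List (Norm E) → List (Lit E)
  | [] => []
  | a :: t => a.1 :: a.2 :: litsOf t

/-- A path from the context `C` with respect to the set of norms `R`:
a nonempty chained sequence of distinct norms from `R` whose first body lies in `C`. -/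
def IsPathFrom (C : Finset (Lit E)) (R : Set (Norm E)) : List (Norm E) → Prop
  | [] => False
  | u :: t => u.1 ∈ C ∧ chain (u :: t) ∧ (∀ v ∈ u :: t, v ∈ R) ∧ (u :: t).Nodup

/-- An ordinary argument: a consistent path from the context w.r.t. `N`. -/
def IsOrdArg (H : HANS E) (l : List (Norm E)) : Prop :=
  IsPathFrom H.C (↑H.N) l ∧ LitConsistent {x | x ∈ litsOf l}

/-- `x` is reachable from `C` via a path w.r.t. `R`. -/
def reach (C : Finset (Lit E)) (R : Set (Norm E)) (x : Lit E) : Prop :=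
  ∃ l u, IsPathFrom C R l ∧ l.getLast? = some u ∧ u.2 = x

/-- Arguments: context arguments and ordinary arguments. -/
inductive Arg (E : Type) where
  | ctx : Lit E → Arg E
  | ord : List (Norm E) → Arg E
deriving DecidableEq

/-- Membership in `Arg(H)`. -/
def Arg.IsArg (H : HANS E) : Arg E → Prop
  | .ctx a => a ∈ H.C
  | .ord l => IsOrdArg H l

/-- Conclusion of an argument. -/
def Arg.concl : Arg E → Lit E
  | .ctx a => a
  | .ord l => (l.getLastD (Lit.top, Lit.top)).2

def Arg.isCtx : Arg E → Prop
  | .ctx _ => True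
  | .ord _ => False

def Arg.isOrd : Arg E → Prop
  | .ctx _ => False
  | .ord _ => True

/-- `a` is a sub-argument of `b` (prefix of ordinary arguments; includes `b` itself). -/
def Arg.Sub : Arg E → Arg E → Prop
  | .ord l', .ord l => l' ≠ [] ∧ l' <+: l
  | _, _ => False

/-- Proper sub-argument. -/
def Arg.PSub (a b : Arg E) : Prop := a.Sub b ∧ a ≠ b

def ArgSet (H : HANS E) : Set (Arg E) := {a | a.IsArg H}

/-- `a` attacks `b`: some sub-argument of `b` has conclusion complementary to `concl a`. -/
def Attacks (a b : Arg E) : Prop :=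
  ∃ b', b'.Sub b ∧ Lit.isCompl (Arg.concl b') (Arg.concl a)

/-- `a` defeats `b` relative to a preference relation `pr` on arguments. -/
def Defeats (pr : Arg E → Arg E → Prop) (a b : Arg E) : Prop :=
  ∃ b', b'.Sub b ∧ Lit.isCompl (Arg.concl b') (Arg.concl a) ∧
    (a.isCtx ∨ (a.isOrd ∧ pr a b'))

/-- Weakest link (disjoint elitist) preference. -/
def wlPref (r : Norm E → ℕ) : Arg E → Arg E → Prop
  | .ord l1, .ord l2 => ∃ v ∈ l2, v ∉ l1 ∧ ∀ u ∈ l1, u ∉ l2 → r v ≤ r u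
  | _, _ => False

/-- Last link preference: compare the ranks of the top (last) norms. -/
def llPref (r : Norm E → ℕ) : Arg E → Arg E → Prop
  | .ord l1, .ord l2 => ∃ u v, l1.getLast? = some u ∧ l2.getLast? = some v ∧ r v ≤ r u
  | _, _ => False

/-- Strict preference. -/
def sPref {α : Type} (pr : α → α → Prop) (a b : α) : Prop := pr a b ∧ ¬ pr b a

section Semantics

variable {α : Type}

def ConflictFree (A : Set α) (D : α → α → Prop) (B : Set α) : Prop :=
  B ⊆ A ∧ ∀ a ∈ B, ∀ b ∈ B, ¬ D a b

def Defends (A : Set α) (D : α → α → Prop) (B : Set α) (x : α) : Prop :=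
  ∀ b ∈ A, D b x → ∃ c ∈ B, D c b

def Admissible (A : Set α) (D : α → α → Prop) (B : Set α) : Prop :=
  ConflictFree A D B ∧ ∀ a ∈ B, Defends A D B a

def Complete (A : Set α) (D : α → α → Prop) (B : Set α) : Prop :=
  Admissible A D B ∧ ∀ a ∈ A, Defends A D B a → a ∈ B

def Grounded (A : Set α) (D : α → α → Prop) (B : Set α) : Prop :=
  Complete A D B ∧ ∀ B', Complete A D B' → B ⊆ B'

def Preferred (A : Set α) (D : α → α → Prop) (B : Set α) : Prop :=
  Admissible A D B ∧ ∀ B', Admissible A D B' → B ⊆ B' → B' = B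

def Stable (A : Set α) (D : α → α → Prop) (B : Set α) : Prop :=
  ConflictFree A D B ∧ ∀ a ∈ A, a ∉ B → ∃ b ∈ B, D b a

/-- The relation `D` has a cycle inside `A`. -/
def HasCycle (A : Set α) (D : α → α → Prop) : Prop :=
  ∃ a l, (∀ x ∈ a :: l, x ∈ A) ∧ List.Chain D a l ∧
    D ((a :: l).getLast (by simp)) a

end Semantics

/-- Conclusions of the ordinary arguments in a set of arguments. -/
def ordConcls (Ex : Set (Arg E)) : Set (Lit E) :=
  {x | ∃ l, Arg.ord l ∈ Ex ∧ Arg.concl (Arg.ord l) = x}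

def Outfamily (H : HANS E) (pr : Arg E → Arg E → Prop) : Set (Set (Lit E)) :=
  {S | ∃ Ex, Stable (ArgSet H) (Defeats pr) Ex ∧ S = ordConcls Ex}

/-- Heads of a set of norms. -/
def consSet (R : Finset (Norm E)) : Finset (Lit E) := R.image Prod.snd

/-- Applicable norms: `Appl(N, C, R)`. -/
def Appl (H : HANS E) (R : Finset (Norm E)) : Finset (Norm E) :=
  (H.N \ R).filter (fun u => u.1 ∈ H.C ∪ consSet R ∧
    ¬ (u.2 ∈ H.C ∪ consSet R ∧ u.2.compl ∈ H.C ∪ consSet R))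

open scoped Classical in
/-- The applicable norms of maximal rank. -/
noncomputable def maxSel (H : HANS E) (R : Finset (Norm E)) : Finset (Norm E) :=
  (Appl H R).filter (fun u => ∀ v ∈ Appl H R, H.r v ≤ H.r u)

/-- The Greedy sequence `R_i`. -/
noncomputable def greedyR (H : HANS E) : ℕ → Finset (Norm E)
  | 0 => ∅
  | i + 1 => greedyR H i ∪ maxSel H (greedyR H i)

/-- The limit `R = ⋃ R_i` of the Greedy construction. -/
noncomputable def greedyLimit (H : HANS E) : Set (Norm E) := ⋃ i, ↑(greedyR H i)

/-- The Greedy extension `R(C)`. -/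
noncomputable def GreedySet (H : HANS E) : Set (Lit E) :=
  {x | reach H.C (greedyLimit H) x}

/-- The reduct `H^X`. -/
def reduct (H : HANS E) (X : Finset (Lit E)) : HANS E where
  N := (H.N.filter (fun u => u.1 ∈ H.C ∪ X)).image (fun u => (Lit.top, u.2))
  C := H.C
  r := fun u => (H.N.filter (fun v => v.1 ∈ H.C ∪ X ∧ v.2 = u.2)).sup H.r
  top_mem := H.top_mem
  C_cons := H.C_cons

/-- `u` is a weakest norm (of minimal rank) of the list `l`. -/
def WeakestNorm (r : Norm E → ℕ) (u : Norm E) (l : List (Norm E)) : Prop :=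
  u ∈ l ∧ ∀ v ∈ l, r u ≤ r v

/-- `l'` is the weakest sub-argument of the ordinary argument `l`. -/
def IsWeakestSub (H : HANS E) (l l' : List (Norm E)) : Prop :=
  l' ≠ [] ∧ l' <+: l ∧ ∃ u, l'.getLast? = some u ∧ WeakestNorm H.r u l

/-- `g ∈ warg(b)`: `g` is a super-argument of the weakest sub-argument of `b`. -/
def Warg (H : HANS E) (b g : Arg E) : Prop :=
  ∃ lb l', b = .ord lb ∧ IsWeakestSub H lb l' ∧ (Arg.ord l').Sub g

/-- Arguments of the expanded framework: the original arguments plus `aux`. -/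
inductive XArg (E : Type) where
  | base : Arg E → XArg E
  | aux : XArg E

/-- Defeat in the expanded framework: the original weakest-link defeats
plus the auxiliary defeats `Φ₁` and `Φ₂`. -/
def XDef (H : HANS E) : XArg E → XArg E → Prop
  | .base a, .base g =>
      Defeats (wlPref H.r) a g ∨
      (∃ b, Arg.IsArg H b ∧ Defeats (wlPref H.r) a b ∧ ¬ Warg H b a ∧
        Warg H b g ∧ g.PSub b)
  | .aux, .base g =>
      ∃ a b, Arg.IsArg H a ∧ Arg.IsArg H b ∧ Defeats (wlPref H.r) a b ∧
        Warg H b a ∧ Warg H b g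
  | _, .aux => False

def XArgSet (H : HANS E) : Set (XArg E) :=
  {x | x = .aux ∨ ∃ a, x = .base a ∧ a.IsArg H}

open scoped Classical in
/-- The Optimization construction along the priority-ordered list `T` of norms. -/
noncomputable def optFold (H : HANS E) (T : List (Norm E)) : Finset (Norm E) :=
  T.foldl (fun R u =>
    if LitConsistent ((↑H.C : Set (Lit E)) ∪ {x | reach H.C (↑(insert u R)) x})
    then insert u R else R) ∅

/-- The Optimization extension `R_n(C)`. -/
noncomputable def OptSet (H : HANS E) (T : List (Norm E)) : Set (Lit E) :=
  {x | reach H.C (↑(optFold H T)) x}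

/-- direct consistency — the conclusions of ordinary arguments in a
complete extension form a consistent set of literals. -/
theorem direct_consistency {E : Type} [DecidableEq E] (H : HANS E)
    (pr : Arg E → Arg E → Prop)
    (hpr : ∀ a b : Arg E, a.isOrd → b.isOrd → pr a b ∨ pr b a)
    (Ex : Set (Arg E)) (hc : Complete (ArgSet H) (Defeats pr) Ex) :
    LitConsistent (ordConcls Ex) := by
  rintro x ⟨l1, h1, hx⟩ y ⟨l2, h2, hy⟩ hcompl
  obtain ⟨⟨hsub, hcf⟩, _⟩ := hc.1
  have hne1 : l1 ≠ [] := by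
    have := hsub h1
    intro h; subst h; exact this.1
  have hne2 : l2 ≠ [] := by
    have := hsub h2
    intro h; subst h; exact this.1
  -- symmetric complement
  have hcompl' : Lit.isCompl y x := by
    obtain ⟨hxt, hyx⟩ := hcompl
    subst hyx
    cases x with
    | top => exact absurd rfl hxt
    | pos e => exact ⟨by simp [Lit.compl], by simp [Lit.compl]⟩
    | neg e => exact ⟨by simp [Lit.compl], by simp [Lit.compl]⟩
  subst hx; subst hy
  rcases hpr (Arg.ord l1) (Arg.ord l2) trivial trivial with hp | hp
  · exact hcf _ h1 _ h2 ⟨Arg.ord l2, ⟨hne2, List.prefix_refl _⟩,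
      hcompl', Or.inr ⟨trivial, hp⟩⟩
  · exact hcf _ h2 _ h1 ⟨Arg.ord l1, ⟨hne1, List.prefix_refl _⟩,
      hcompl, Or.inr ⟨trivial, hp⟩⟩

end HANSF
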